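/- arXiv:2104.12011 — 5 statements merged into one kernel-verified Lean document; each statement's English description precedes it below -/
import Mathlib

section
/- Let (X, μ) be a measure space and let T be a countable collection of measurable subsets of X of finite positive measure. Define the fractional maximal operator M_{T,α} f(z) = sup over sets S in T containing z of μ(S)^α · (1/μ(S)) ∫_S |f| dμ. Suppose 0 < α < 1 and 1 < p < q < ∞ satisfy 1/p − 1/q = α, and suppose that for every t > 0 the superlevel set {M_{T,α} f > t} can be covered by a pairwise disjoint subfamily T_t ⊆ T of sets S each satisfying μ(S)^α · (1/μ(S)) ∫_S |f| dμ > t. Then M_{T,α} maps L^p(μ) boundedly into weak L^q(μ): for all t > 0, t^q · μ({z : M_{T,α} f(z) > t}) ≤ ‖f‖_{L^p}^q. -/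
/-!
On each set `S` of the disjoint cover of `{M > t}`, Hölder's inequality with exponents `p, p'`
bounds the fractional average of `f` by `μ S ^ (α - 1 + 1 / p') (∫_S f ^ p) ^ (1 / p)`, and
`α - 1 + 1 / p' = -1 / q`. Hence `t ^ q μ S ≤ (∫_S f ^ p) ^ (q / p)`. Summing over the cover and
using superadditivity of `x ↦ x ^ (q / p)` (as `q / p ≥ 1`) together with disjointness gives
the weak-type bound.
-/

open MeasureTheory ENNReal

theorem ENNReal.tsum_rpow_le_rpow_tsum {ι : Type*} (g : ι → ℝ≥0∞) {r : ℝ} (hr : 1 ≤ r) :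
    ∑' i, g i ^ r ≤ (∑' i, g i) ^ r := by
  set S := ∑' i, g i
  have hsplit (x : ℝ≥0∞) : x ^ r = x * x ^ (r - 1) :=
    calc x ^ r = x ^ ((1 : ℝ) + (r - 1)) := by ring_nf
      _ = x * x ^ (r - 1) := by rw [rpow_add_of_nonneg _ _ zero_le_one (by linarith), rpow_one]
  calc ∑' i, g i ^ r ≤ ∑' i, g i * S ^ (r - 1) := by
        refine ENNReal.tsum_le_tsum fun i => ?_
        rw [hsplit]
        gcongr
        exact ENNReal.le_tsum i
    _ = S ^ r := by rw [ENNReal.tsum_mul_right, ← hsplit]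

theorem ENNReal.inv_mul_self_le_one (c : ℝ≥0∞) : c⁻¹ * c ≤ 1 := by
  rcases eq_or_ne c 0 with rfl | hc0
  · simp
  rcases eq_or_ne c ∞ with rfl | hctop
  · simp
  rw [ENNReal.inv_mul_cancel hc0 hctop]

theorem ENNReal.rpow_mul_le_rpow_of_le_rpow_neg_inv_mul {q : ℝ} (hq : 0 < q) {t c A : ℝ≥0∞}
    (h : t ≤ c ^ (-(1 / q)) * A) : t ^ q * c ≤ A ^ q :=
  calc t ^ q * c ≤ (c ^ (-(1 / q)) * A) ^ q * c := by gcongr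
    _ = A ^ q * (c⁻¹ * c) := by
        rw [mul_rpow_of_nonneg _ _ hq.le, ← rpow_mul,
          show -(1 / q) * q = -1 by field_simp, rpow_neg_one]
        ring
    _ ≤ A ^ q := mul_le_of_le_one_right' (inv_mul_self_le_one c)

section FractionalAverage

variable {X : Type*} [MeasurableSpace X] {μ : Measure X} {f : X → ℝ≥0∞}

theorem setLIntegral_le_rpow_mul_measure_rpow {p p' : ℝ} (hpp' : p.HolderConjugate p')
    (hf : AEMeasurable f μ) (S : Set X) :
    ∫⁻ x in S, f x ∂μ ≤ (∫⁻ x in S, f x ^ p ∂μ) ^ (1 / p) * μ S ^ (1 / p') := by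
  simpa using ENNReal.lintegral_mul_le_Lp_mul_Lq (μ.restrict S) hpp' hf.restrict
    (aemeasurable_const (b := (1 : ℝ≥0∞)))

/-- When `μ S = 0` or `μ S = ∞` the left side is `0`, since `0 * ⊤ = 0` in `ℝ≥0∞`. -/
theorem fractional_average_le {α p q : ℝ} (hp : 1 < p) (hpqα : 1 / p - 1 / q = α)
    (hf : AEMeasurable f μ) (S : Set X) :
    μ S ^ α * (μ S)⁻¹ * ∫⁻ x in S, f x ∂μ
      ≤ μ S ^ (-(1 / q)) * (∫⁻ x in S, f x ^ p ∂μ) ^ (1 / p) := by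
  rcases eq_or_ne (μ S) 0 with hS0 | hS0
  · simp [Measure.restrict_eq_zero.mpr hS0]
  rcases eq_or_ne (μ S) ∞ with hStop | hStop
  · simp [hStop]
  have hpp' := Real.HolderConjugate.conjExponent hp
  have hexp : α + -1 + 1 / p.conjExponent = -(1 / q) := by
    have := hpp'.inv_add_inv_eq_one
    simp only [one_div] at hpqα ⊢
    linarith
  calc μ S ^ α * (μ S)⁻¹ * ∫⁻ x in S, f x ∂μ
      ≤ μ S ^ α * (μ S)⁻¹ *
          ((∫⁻ x in S, f x ^ p ∂μ) ^ (1 / p) * μ S ^ (1 / p.conjExponent)) := by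
        gcongr
        exact setLIntegral_le_rpow_mul_measure_rpow hpp' hf S
    _ = μ S ^ (-(1 / q)) * (∫⁻ x in S, f x ^ p ∂μ) ^ (1 / p) := by
        rw [← rpow_neg_one, ← hexp, rpow_add _ _ hS0 hStop, rpow_add _ _ hS0 hStop]
        ring

theorem rpow_mul_measure_le_of_lt_fractional_average {α p q : ℝ} (hp : 1 < p)
    (hq : 0 < q) (hpqα : 1 / p - 1 / q = α) (hf : AEMeasurable f μ) {S : Set X} {t : ℝ≥0∞}
    (ht : t < μ S ^ α * (μ S)⁻¹ * ∫⁻ x in S, f x ∂μ) :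
    t ^ q * μ S ≤ (∫⁻ x in S, f x ^ p ∂μ) ^ (q / p) := by
  have h := rpow_mul_le_rpow_of_le_rpow_neg_inv_mul hq
    (ht.le.trans (fractional_average_le hp hpqα hf S))
  rwa [← rpow_mul, one_div_mul_eq_div] at h

end FractionalAverage

theorem fractional_maximal_weak_type_general {X : Type*} [MeasurableSpace X] (μ : Measure X)
    (T : ℕ → Set X) (hTm : ∀ j, MeasurableSet (T j))
    (α p q : ℝ)
    (hp : 1 < p) (hpq : p < q) (hpqα : 1 / p - 1 / q = α)
    (f : X → ℝ≥0∞) (hf : Measurable f)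
    (M : X → ℝ≥0∞)
    (hcover : ∀ t : ℝ≥0∞, 0 < t → ∃ Tt : Set ℕ,
      ({z | t < M z} ⊆ ⋃ j ∈ Tt, T j) ∧
      (Tt.Pairwise fun i j => Disjoint (T i) (T j)) ∧
      (∀ j ∈ Tt, t < μ (T j) ^ α * (μ (T j))⁻¹ * ∫⁻ x in T j, f x ∂μ)) :
    ∀ t : ℝ≥0∞, 0 < t →
      t ^ q * μ {z | t < M z} ≤ (∫⁻ x, f x ^ p ∂μ) ^ (q / p) := by
  intro t ht
  obtain ⟨Tt, hsub, hdisj, hbig⟩ := hcover t ht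
  have hp0 : 0 < p := one_pos.trans hp
  have hqp : 1 ≤ q / p := by rw [le_div_iff₀ hp0]; linarith
  calc t ^ q * μ {z | t < M z} ≤ t ^ q * ∑' j : Tt, μ (T j) := by
        gcongr
        exact (measure_mono hsub).trans (measure_biUnion_le μ Tt.to_countable T)
    _ = ∑' j : Tt, t ^ q * μ (T j) := ENNReal.tsum_mul_left.symm
    _ ≤ ∑' j : Tt, (∫⁻ x in T j, f x ^ p ∂μ) ^ (q / p) :=
        ENNReal.tsum_le_tsum fun j => rpow_mul_measure_le_of_lt_fractional_average hp
          (hp0.trans hpq) hpqα hf.aemeasurable (hbig j j.2)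
    _ ≤ (∑' j : Tt, ∫⁻ x in T j, f x ^ p ∂μ) ^ (q / p) := ENNReal.tsum_rpow_le_rpow_tsum _ hqp
    _ = (∫⁻ x in ⋃ j ∈ Tt, T j, f x ^ p ∂μ) ^ (q / p) := by
        rw [lintegral_biUnion Tt.to_countable (fun j _ => hTm j) hdisj]
    _ ≤ (∫⁻ x, f x ^ p ∂μ) ^ (q / p) := by
        exact rpow_le_rpow (setLIntegral_le_lintegral _ _) (by positivity)

/-- Weak (p,q) bound for the fractional maximal operator associated to a
countable basis `T`, given a covering property of superlevel sets by
disjoint subfamilies. -/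
theorem fractional_maximal_weak_type {X : Type*} [MeasurableSpace X] (μ : Measure X)
    (T : ℕ → Set X) (hTm : ∀ j, MeasurableSet (T j))
    (hTpos : ∀ j, 0 < μ (T j)) (hTfin : ∀ j, μ (T j) < ∞)
    (α p q : ℝ) (hα0 : 0 < α) (hα1 : α < 1)
    (hp : 1 < p) (hpq : p < q) (hpqα : 1 / p - 1 / q = α)
    (f : X → ℝ≥0∞) (hf : Measurable f)
    (M : X → ℝ≥0∞)
    (hM : ∀ z, M z = ⨆ j, (T j).indicator
      (fun _ => μ (T j) ^ α * (μ (T j))⁻¹ * ∫⁻ x in T j, f x ∂μ) z)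
    (hcover : ∀ t : ℝ≥0∞, 0 < t → ∃ Tt : Set ℕ,
      ({z | t < M z} ⊆ ⋃ j ∈ Tt, T j) ∧
      (Tt.Pairwise fun i j => Disjoint (T i) (T j)) ∧
      (∀ j ∈ Tt, t < μ (T j) ^ α * (μ (T j))⁻¹ * ∫⁻ x in T j, f x ∂μ)) :
    ∀ t : ℝ≥0∞, 0 < t →
      t ^ q * μ {z | t < M z} ≤ (∫⁻ x, f x ^ p ∂μ) ^ (q / p) :=
  fractional_maximal_weak_type_general μ T hTm α p q hp hpq hpqα f hf M hcover
end

section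
/- Let (X, μ) be a measure space, q ≥ p ≥ 1, N an integer with 1 ≤ N ≤ q, f a measurable function, and {T_j} a countable family of measurable sets with sub-means ⟨g⟩_{T_j} = μ(T_j)^{-1} ∫_{T_j} g dμ. If for a measurable G : X × X → [0,∞) one has the pointwise sparse bound ∫_X |f(w)|^{q−N} G(z,w) dν(w) ≤ Σ_j 1_{T_j}(z) μ(T_j)^{q/p − 1} ⟨|f|^{q−N}⟩_{T_j} for all z, then ∫_X ∫_X |f(w)|^N |f(z)|^{q−N} G(z,w) dν(w) dμ'(z), with dμ'(z) the measure integrating over z restricted to the tents, is bounded by Σ_j μ(T_j)^{q/p} ⟨|f|^N⟩_{T_j} ⟨|f|^{q−N}⟩_{T_j}. -/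
open MeasureTheory ENNReal

theorem lintegral_mul_tsum_indicator_const {X ι : Type*} [MeasurableSpace X] [Countable ι]
    {μ : Measure X} {g : X → ℝ≥0∞} (hg : AEMeasurable g μ) {T : ι → Set X}
    (hT : ∀ j, MeasurableSet (T j)) (c : ι → ℝ≥0∞) :
    ∫⁻ z, g z * ∑' j, (T j).indicator (fun _ => c j) z ∂μ =
      ∑' j, c j * ∫⁻ z in T j, g z ∂μ := by
  simp_rw [← ENNReal.tsum_mul_left, ← Set.indicator_mul_right]
  rw [lintegral_tsum fun j => (hg.mul_const (c j)).indicator (hT j)]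
  refine tsum_congr fun j => ?_
  rw [lintegral_indicator (hT j), lintegral_mul_const'' _ hg.restrict, mul_comm]

theorem sparse_domination_bilinear_general {X : Type*} [MeasurableSpace X] (μ ν : Measure X)
    (p q : ℝ) (N : ℕ) (T : ℕ → Set X) (hTm : ∀ j, MeasurableSet (T j))
    (hTpos : ∀ j, 0 < μ (T j)) (hTfin : ∀ j, μ (T j) < ∞)
    (f : X → ℝ≥0∞) (hf : Measurable f) (G : X → X → ℝ≥0∞)
    (hpt : ∀ z, (∫⁻ w, f w ^ (q - (N : ℝ)) * G z w ∂ν) ≤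
      ∑' j, (T j).indicator (fun _ => μ (T j) ^ (q / p - 1) *
        ((μ (T j))⁻¹ * ∫⁻ x in T j, f x ^ (q - (N : ℝ)) ∂μ)) z) :
    ∫⁻ z, f z ^ (N : ℝ) * ∫⁻ w, f w ^ (q - (N : ℝ)) * G z w ∂ν ∂μ ≤
      ∑' j, μ (T j) ^ (q / p) *
        ((μ (T j))⁻¹ * ∫⁻ x in T j, f x ^ (N : ℝ) ∂μ) *
        ((μ (T j))⁻¹ * ∫⁻ x in T j, f x ^ (q - (N : ℝ)) ∂μ) := by
  refine (lintegral_mono fun z => mul_le_mul_right (hpt z) _).trans_eq ?_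
  rw [lintegral_mul_tsum_indicator_const (hf.pow_const _).aemeasurable hTm]
  refine tsum_congr fun j => ?_
  rw [ENNReal.rpow_sub _ _ (hTpos j).ne' (hTfin j).ne, ENNReal.rpow_one, div_eq_mul_inv]
  ring

/-- Abstract sparse domination: integrating a pointwise dyadic bound on
`∫ |f(w)|^{q-N} G(z,w) dν(w)` against `|f(z)|^N dμ(z)` produces the symmetric
sparse form `Σ_j μ(T_j)^{q/p} ⟨|f|^N⟩_{T_j} ⟨|f|^{q-N}⟩_{T_j}`. -/
theorem sparse_domination_bilinear {X : Type*} [MeasurableSpace X] (μ ν : Measure X)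
    (p q : ℝ) (hp : 1 ≤ p) (hpq : p ≤ q)
    (N : ℕ) (hN : 1 ≤ N) (hNq : (N : ℝ) ≤ q)
    (T : ℕ → Set X) (hTm : ∀ j, MeasurableSet (T j))
    (hTpos : ∀ j, 0 < μ (T j)) (hTfin : ∀ j, μ (T j) < ∞)
    (f : X → ℝ≥0∞) (hf : Measurable f) (G : X → X → ℝ≥0∞)
    (hpt : ∀ z, (∫⁻ w, f w ^ (q - (N : ℝ)) * G z w ∂ν) ≤
      ∑' j, (T j).indicator (fun _ => μ (T j) ^ (q / p - 1) *
        ((μ (T j))⁻¹ * ∫⁻ x in T j, f x ^ (q - (N : ℝ)) ∂μ)) z) :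
    ∫⁻ z, f z ^ (N : ℝ) * ∫⁻ w, f w ^ (q - (N : ℝ)) * G z w ∂ν ∂μ ≤
      ∑' j, μ (T j) ^ (q / p) *
        ((μ (T j))⁻¹ * ∫⁻ x in T j, f x ^ (N : ℝ) ∂μ) *
        ((μ (T j))⁻¹ * ∫⁻ x in T j, f x ^ (q - (N : ℝ)) ∂μ) :=
  sparse_domination_bilinear_general μ ν p q N T hTm hTpos hTfin f hf G hpt
end

section
/- Let (X, μ) be a measure space, q > 1 an integer exponent with 1 ≤ N < q, and let {T_j} be a countable family of measurable sets of finite positive measure together with pairwise disjoint subsets K_j ⊆ T_j satisfying μ(K_j) ≥ c μ(T_j) for a fixed c > 0. Let M f(z) = sup_{j : z ∈ T_j} ⟨|f|⟩_{T_j} be the maximal operator over the family, and assume M is bounded on L^{q/N}(μ) and on L^{q/(q−N)}(μ). Then Σ_j μ(T_j) ⟨|f|^N⟩_{T_j} ⟨|f|^{q−N}⟩_{T_j} ≤ C ‖f‖_{L^q(μ)}^q for all f ∈ L^q(μ). -/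
open MeasureTheory ENNReal

/-!
On each kube `K_j` the two averages over `T_j` are dominated by the maximal functions of
`|f|^N` and `|f|^{q-N}`, and `μ(T_j) ≤ c⁻¹ μ(K_j)`. Since the kubes are disjoint, the sparse
sum is therefore at most `c⁻¹ ∫ M(|f|^N) M(|f|^{q-N}) dμ`. Hölder's inequality with the
conjugate exponents `q/N` and `q/(q-N)`, followed by the two maximal bounds, gives
`A^{N/q} B^{(q-N)/q} ∫ |f|^q dμ`, because `(|f|^N)^{q/N} = (|f|^{q-N})^{q/(q-N)} = |f|^q`.
-/

lemma Real.holderConjugate_div_div_sub {a b : ℝ} (ha : 0 < a) (hab : a < b) :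
    (b / a).HolderConjugate (b / (b - a)) := by
  have hb : 0 < b := ha.trans hab
  simpa only [one_div_div] using
    Real.holderConjugate_one_div (div_pos ha hb) (div_pos (sub_pos.2 hab) hb)
      (by field_simp; ring)

lemma ENNReal.inv_measure_mul_setLIntegral {X : Type*} [MeasurableSpace X] (μ : Measure X)
    (s : Set X) (f : X → ℝ≥0∞) :
    (μ s)⁻¹ * ∫⁻ x in s, f x ∂μ = ⨍⁻ x in s, f x ∂μ := by
  rw [setLAverage_eq, ENNReal.div_eq_inv_mul]

lemma lintegral_rpow_rpow_div {X : Type*} [MeasurableSpace X] (μ : Measure X)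
    (f : X → ℝ≥0∞) {a : ℝ} (ha : a ≠ 0) (b : ℝ) :
    ∫⁻ x, (f x ^ a) ^ (b / a) ∂μ = ∫⁻ x, f x ^ b ∂μ := by
  simp_rw [← ENNReal.rpow_mul, mul_div_cancel₀ _ ha]

lemma lintegral_mul_le_of_lintegral_rpow_le {X : Type*} [MeasurableSpace X] {μ : Measure X}
    {p r : ℝ} (hpr : p.HolderConjugate r) {F G : X → ℝ≥0∞}
    (hF : AEMeasurable F μ) (hG : AEMeasurable G μ) {A B I : ℝ≥0∞}
    (hFI : ∫⁻ x, F x ^ p ∂μ ≤ A * I) (hGI : ∫⁻ x, G x ^ r ∂μ ≤ B * I) :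
    ∫⁻ x, F x * G x ∂μ ≤ A ^ (1 / p) * B ^ (1 / r) * I := by
  have hp : 0 ≤ 1 / p := one_div_nonneg.2 hpr.nonneg
  have hr : 0 ≤ 1 / r := one_div_nonneg.2 hpr.symm.nonneg
  calc ∫⁻ x, F x * G x ∂μ
      ≤ (∫⁻ x, F x ^ p ∂μ) ^ (1 / p) * (∫⁻ x, G x ^ r ∂μ) ^ (1 / r) :=
        ENNReal.lintegral_mul_le_Lp_mul_Lq μ hpr hF hG
    _ ≤ (A * I) ^ (1 / p) * (B * I) ^ (1 / r) := by gcongr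
    _ = A ^ (1 / p) * B ^ (1 / r) * (I ^ (1 / p) * I ^ (1 / r)) := by
        rw [ENNReal.mul_rpow_of_nonneg _ _ hp, ENNReal.mul_rpow_of_nonneg _ _ hr]
        ring
    _ = A ^ (1 / p) * B ^ (1 / r) * I := by
        rw [← ENNReal.rpow_add_of_nonneg _ _ hp hr, one_div, one_div,
          hpr.inv_add_inv_eq_one, ENNReal.rpow_one]

section MaximalFunction

variable {X ι : Type*} [MeasurableSpace X] (μ : Measure X) (T : ι → Set X)

/-- The maximal operator `M g z = sup_{j : z ∈ T_j} ⨍_{T_j} g` of the family `T`. -/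
noncomputable def maximalFunction (g : X → ℝ≥0∞) (z : X) : ℝ≥0∞ :=
  ⨆ j, (T j).indicator (fun _ => ⨍⁻ x in T j, g x ∂μ) z

variable {μ T}

lemma setLAverage_le_maximalFunction {g : X → ℝ≥0∞} {j : ι} {z : X} (hz : z ∈ T j) :
    ⨍⁻ x in T j, g x ∂μ ≤ maximalFunction μ T g z :=
  le_iSup_of_le j (Set.indicator_of_mem hz (fun _ => ⨍⁻ x in T j, g x ∂μ)).ge

lemma measurable_maximalFunction [Countable ι] (hT : ∀ j, MeasurableSet (T j))
    (g : X → ℝ≥0∞) : Measurable (maximalFunction μ T g) :=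
  .iSup fun j => measurable_const.indicator (hT j)

theorem mul_tsum_sparse_le_lintegral_maximalFunction_mul [Countable ι] {K : ι → Set X}
    (hKT : ∀ j, K j ⊆ T j) (hK : ∀ j, MeasurableSet (K j))
    (hdisj : Pairwise (Function.onFun Disjoint K)) {c : ℝ≥0∞}
    (hlow : ∀ j, c * μ (T j) ≤ μ (K j)) (g₁ g₂ : X → ℝ≥0∞) :
    c * ∑' j, μ (T j) * (⨍⁻ x in T j, g₁ x ∂μ) * ⨍⁻ x in T j, g₂ x ∂μ ≤
      ∫⁻ z, maximalFunction μ T g₁ z * maximalFunction μ T g₂ z ∂μ := by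
  have hterm : ∀ j, c * (μ (T j) * (⨍⁻ x in T j, g₁ x ∂μ) * ⨍⁻ x in T j, g₂ x ∂μ) ≤
      ∫⁻ z in K j, maximalFunction μ T g₁ z * maximalFunction μ T g₂ z ∂μ := fun j =>
    calc c * (μ (T j) * (⨍⁻ x in T j, g₁ x ∂μ) * ⨍⁻ x in T j, g₂ x ∂μ)
        = c * μ (T j) * ((⨍⁻ x in T j, g₁ x ∂μ) * ⨍⁻ x in T j, g₂ x ∂μ) := by ring
      _ ≤ μ (K j) * ((⨍⁻ x in T j, g₁ x ∂μ) * ⨍⁻ x in T j, g₂ x ∂μ) := by gcongr; exact hlow j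
      _ = ∫⁻ _ in K j, (⨍⁻ x in T j, g₁ x ∂μ) * ⨍⁻ x in T j, g₂ x ∂μ ∂μ := by
          rw [setLIntegral_const, mul_comm]
      _ ≤ ∫⁻ z in K j, maximalFunction μ T g₁ z * maximalFunction μ T g₂ z ∂μ :=
          setLIntegral_mono' (hK j) fun z hz =>
            mul_le_mul' (setLAverage_le_maximalFunction (hKT j hz))
              (setLAverage_le_maximalFunction (hKT j hz))
  calc c * ∑' j, μ (T j) * (⨍⁻ x in T j, g₁ x ∂μ) * ⨍⁻ x in T j, g₂ x ∂μ
      ≤ ∑' j, ∫⁻ z in K j, maximalFunction μ T g₁ z * maximalFunction μ T g₂ z ∂μ := by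
        rw [← ENNReal.tsum_mul_left]
        exact ENNReal.tsum_le_tsum hterm
    _ = ∫⁻ z in ⋃ j, K j, maximalFunction μ T g₁ z * maximalFunction μ T g₂ z ∂μ :=
        (lintegral_iUnion hK hdisj _).symm
    _ ≤ ∫⁻ z, maximalFunction μ T g₁ z * maximalFunction μ T g₂ z ∂μ :=
        setLIntegral_le_lintegral _ _

end MaximalFunction

theorem sparse_form_controls_Lq_general {X : Type*} [MeasurableSpace X] (μ : Measure X)
    (q N : ℕ) (hN : 1 ≤ N) (hNq : N < q)
    (T K : ℕ → Set X) (hTm : ∀ j, MeasurableSet (T j))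
    (hKT : ∀ j, K j ⊆ T j) (hKm : ∀ j, MeasurableSet (K j))
    (hdisj : Pairwise (Function.onFun Disjoint K))
    (c : ℝ≥0∞) (hc : 0 < c) (hlow : ∀ j, c * μ (T j) ≤ μ (K j))
    (M : (X → ℝ≥0∞) → X → ℝ≥0∞)
    (hM : ∀ g z, M g z =
      ⨆ j, (T j).indicator (fun _ => (μ (T j))⁻¹ * ∫⁻ x in T j, g x ∂μ) z)
    (A B : ℝ≥0∞) (hA : A < ∞) (hB : B < ∞)
    (hM1 : ∀ g : X → ℝ≥0∞, Measurable g →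
      ∫⁻ z, M g z ^ ((q : ℝ) / N) ∂μ ≤ A * ∫⁻ z, g z ^ ((q : ℝ) / N) ∂μ)
    (hM2 : ∀ g : X → ℝ≥0∞, Measurable g →
      ∫⁻ z, M g z ^ ((q : ℝ) / ((q : ℝ) - N)) ∂μ ≤
        B * ∫⁻ z, g z ^ ((q : ℝ) / ((q : ℝ) - N)) ∂μ) :
    ∃ C : ℝ≥0∞, C < ∞ ∧ ∀ f : X → ℝ≥0∞, Measurable f →
      ∑' j, μ (T j) * ((μ (T j))⁻¹ * ∫⁻ x in T j, f x ^ (N : ℝ) ∂μ) *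
        ((μ (T j))⁻¹ * ∫⁻ x in T j, f x ^ ((q : ℝ) - N) ∂μ) ≤
      C * ∫⁻ x, f x ^ (q : ℝ) ∂μ := by
  have hN0 : (0 : ℝ) < N := by exact_mod_cast hN
  have hqN : (N : ℝ) < q := by exact_mod_cast hNq
  have hMT : M = maximalFunction μ T := by
    funext g z
    simp only [hM, inv_measure_mul_setLIntegral, maximalFunction]
  -- `c` itself may be `∞`; `min c 1` still satisfies `hlow` and can be divided out.
  set c' := min c 1
  have hc'0 : c' ≠ 0 := (lt_min hc one_pos).ne'
  have hc'top : c' ≠ ∞ := ne_top_of_le_ne_top one_ne_top (min_le_right c 1)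
  refine ⟨c'⁻¹ * (A ^ (1 / ((q : ℝ) / N)) * B ^ (1 / ((q : ℝ) / (q - N)))),
    by finiteness, fun f hf => ?_⟩
  simp_rw [inv_measure_mul_setLIntegral]
  rw [mul_assoc, ← ENNReal.mul_le_iff_le_inv hc'0 hc'top]
  have hlow' : ∀ j, c' * μ (T j) ≤ μ (K j) := fun j =>
    (mul_le_mul_left (min_le_left c 1) _).trans (hlow j)
  calc c' * _ ≤ ∫⁻ z, maximalFunction μ T (fun x => f x ^ (N : ℝ)) z *
        maximalFunction μ T (fun x => f x ^ ((q : ℝ) - N)) z ∂μ :=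
        mul_tsum_sparse_le_lintegral_maximalFunction_mul hKT hKm hdisj hlow' _ _
    _ ≤ _ := by
        refine lintegral_mul_le_of_lintegral_rpow_le (Real.holderConjugate_div_div_sub hN0 hqN)
          (measurable_maximalFunction hTm _).aemeasurable
          (measurable_maximalFunction hTm _).aemeasurable ?_ ?_
        · rw [← hMT, ← lintegral_rpow_rpow_div μ f hN0.ne']
          exact hM1 _ (hf.pow_const _)
        · rw [← hMT, ← lintegral_rpow_rpow_div μ f (sub_pos.2 hqN).ne']
          exact hM2 _ (hf.pow_const _)

/-- The sparse form controls the `L^q` norm: given tents `T_j` with pairwise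
disjoint kubes `K_j ⊆ T_j` of comparable measure, and a maximal operator `M`
over the tents bounded on `L^{q/N}` and on `L^{q/(q-N)}`, one has
`Σ_j μ(T_j) ⟨|f|^N⟩_{T_j} ⟨|f|^{q-N}⟩_{T_j} ≤ C ‖f‖_{L^q}^q`. -/
theorem sparse_form_controls_Lq {X : Type*} [MeasurableSpace X] (μ : Measure X)
    (q N : ℕ) (hq : 1 < q) (hN : 1 ≤ N) (hNq : N < q)
    (T K : ℕ → Set X) (hTm : ∀ j, MeasurableSet (T j))
    (hTpos : ∀ j, 0 < μ (T j)) (hTfin : ∀ j, μ (T j) < ∞)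
    (hKT : ∀ j, K j ⊆ T j) (hKm : ∀ j, MeasurableSet (K j))
    (hdisj : Pairwise (Function.onFun Disjoint K))
    (c : ℝ≥0∞) (hc : 0 < c) (hlow : ∀ j, c * μ (T j) ≤ μ (K j))
    (M : (X → ℝ≥0∞) → X → ℝ≥0∞)
    (hM : ∀ g z, M g z =
      ⨆ j, (T j).indicator (fun _ => (μ (T j))⁻¹ * ∫⁻ x in T j, g x ∂μ) z)
    (A B : ℝ≥0∞) (hA : A < ∞) (hB : B < ∞)
    (hM1 : ∀ g : X → ℝ≥0∞, Measurable g →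
      ∫⁻ z, M g z ^ ((q : ℝ) / N) ∂μ ≤ A * ∫⁻ z, g z ^ ((q : ℝ) / N) ∂μ)
    (hM2 : ∀ g : X → ℝ≥0∞, Measurable g →
      ∫⁻ z, M g z ^ ((q : ℝ) / ((q : ℝ) - N)) ∂μ ≤
        B * ∫⁻ z, g z ^ ((q : ℝ) / ((q : ℝ) - N)) ∂μ) :
    ∃ C : ℝ≥0∞, C < ∞ ∧ ∀ f : X → ℝ≥0∞, Measurable f →
      ∑' j, μ (T j) * ((μ (T j))⁻¹ * ∫⁻ x in T j, f x ^ (N : ℝ) ∂μ) *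
        ((μ (T j))⁻¹ * ∫⁻ x in T j, f x ^ ((q : ℝ) - N) ∂μ) ≤
      C * ∫⁻ x, f x ^ (q : ℝ) ∂μ :=
  sparse_form_controls_Lq_general μ q N hN hNq T K hTm hKT hKm hdisj c hc hlow M hM A B hA hB hM1
    hM2
end

section
/- Let (X, μ) be a measure space, 1 ≤ p < q with q < 2p, and N an integer with N < p < q < p + N. Set s = p/(p + N − q) and s' = p/(q − N), so 1/s + 1/s' = 1 and N/p − 1/s = q/p − 1. Let {T_j} be a countable family of measurable sets with pairwise disjoint subsets K_j ⊆ T_j, μ(K_j) ≥ c μ(T_j). Let M be the maximal operator over {T_j} and M_α the fractional maximal operator with α = q/p − 1. Assume M_α : L^{p/N} → L^s is bounded and M : L^{p/(q−N)} → L^{s'} is bounded. Then Σ_j μ(T_j)^{q/p} ⟨|f|^N⟩_{T_j} ⟨|f|^{q−N}⟩_{T_j} ≤ C ‖f‖_{L^p(μ)}^q. -/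
open MeasureTheory ENNReal

/-- The fractional sparse form controls `‖f‖_{L^p}^q` for `p < q`: with
`N < p < q < p + N`, `s = p/(p+N-q)`, `s' = p/(q-N)` and `α = q/p - 1`, if the
fractional maximal operator `M_α` over the tents maps `L^{p/N} → L^s` and the
maximal operator `M` maps `L^{p/(q-N)} → L^{s'}`, then
`Σ_j μ(T_j)^{q/p} ⟨|f|^N⟩_{T_j} ⟨|f|^{q-N}⟩_{T_j} ≤ C ‖f‖_{L^p}^q`. -/
theorem fractional_sparse_form_controls_Lp {X : Type*} [MeasurableSpace X]
    (μ : Measure X) (p q : ℝ) (N : ℕ)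
    (hp : 1 ≤ p) (hNp : (N : ℝ) < p) (hpq : p < q) (hq : q < p + N)
    (s s' : ℝ) (hs : s = p / (p + N - q)) (hs' : s' = p / (q - N))
    (T K : ℕ → Set X) (hTm : ∀ j, MeasurableSet (T j))
    (hTpos : ∀ j, 0 < μ (T j)) (hTfin : ∀ j, μ (T j) < ∞)
    (hKT : ∀ j, K j ⊆ T j) (hKm : ∀ j, MeasurableSet (K j))
    (hdisj : Pairwise (Function.onFun Disjoint K))
    (c : ℝ≥0∞) (hc : 0 < c) (hlow : ∀ j, c * μ (T j) ≤ μ (K j))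
    (M Mα : (X → ℝ≥0∞) → X → ℝ≥0∞)
    (hM : ∀ g z, M g z =
      ⨆ j, (T j).indicator (fun _ => (μ (T j))⁻¹ * ∫⁻ x in T j, g x ∂μ) z)
    (hMα : ∀ g z, Mα g z =
      ⨆ j, (T j).indicator
        (fun _ => μ (T j) ^ (q / p - 1) * ((μ (T j))⁻¹ * ∫⁻ x in T j, g x ∂μ)) z)
    (A B : ℝ≥0∞) (hA : A < ∞) (hB : B < ∞)
    (hbdMα : ∀ g : X → ℝ≥0∞, Measurable g →
      (∫⁻ z, Mα g z ^ s ∂μ) ^ (1 / s) ≤ A * (∫⁻ z, g z ^ (p / N) ∂μ) ^ ((N : ℝ) / p))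
    (hbdM : ∀ g : X → ℝ≥0∞, Measurable g →
      (∫⁻ z, M g z ^ s' ∂μ) ^ (1 / s') ≤
        B * (∫⁻ z, g z ^ (p / (q - N)) ∂μ) ^ ((q - N) / p)) :
    ∃ C : ℝ≥0∞, C < ∞ ∧ ∀ f : X → ℝ≥0∞, Measurable f →
      ∑' j, μ (T j) ^ (q / p) * ((μ (T j))⁻¹ * ∫⁻ x in T j, f x ^ (N : ℝ) ∂μ) *
        ((μ (T j))⁻¹ * ∫⁻ x in T j, f x ^ (q - (N : ℝ)) ∂μ) ≤
      C * (∫⁻ x, f x ^ p ∂μ) ^ (q / p) := by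
  have hp0 : (0:ℝ) < p := lt_of_lt_of_le one_pos hp
  have hN0 : (0:ℝ) < N := by linarith
  have hqN0 : (0:ℝ) < q - N := by linarith
  have hpNq : (0:ℝ) < p + N - q := by linarith
  have hconj : s.HolderConjugate s' := by
    refine ⟨?_, ?_, ?_⟩
    · rw [hs, hs', inv_div, inv_div, inv_one, ← add_div, div_eq_one_iff_eq hp0.ne']; ring
    · rw [hs]; positivity
    · rw [hs']; positivity
  have hcfin : c ≠ ∞ := by
    intro hcne
    have h1 : μ (K 0) ≤ μ (T 0) := measure_mono (hKT 0)
    have h2 := hlow 0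
    rw [hcne, ENNReal.top_mul (hTpos 0).ne'] at h2
    exact (hTfin 0).not_ge (h2.trans h1)
  refine ⟨c⁻¹ * A * B, ?_, ?_⟩
  · exact ENNReal.mul_lt_top (ENNReal.mul_lt_top (ENNReal.inv_lt_top.mpr hc) hA) hB
  intro f hf
  set g1 : X → ℝ≥0∞ := fun x => f x ^ (N : ℝ) with hg1
  set g2 : X → ℝ≥0∞ := fun x => f x ^ (q - (N : ℝ)) with hg2
  have hg1m : Measurable g1 := hf.pow_const _
  have hg2m : Measurable g2 := hf.pow_const _
  have hMαm : Measurable (Mα g1) := by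
    have : Mα g1 = fun z => ⨆ j, (T j).indicator
        (fun _ => μ (T j) ^ (q / p - 1) * ((μ (T j))⁻¹ * ∫⁻ x in T j, g1 x ∂μ)) z :=
      funext (hMα g1)
    rw [this]
    exact Measurable.iSup fun j => measurable_const.indicator (hTm j)
  have hMm : Measurable (M g2) := by
    have : M g2 = fun z => ⨆ j, (T j).indicator
        (fun _ => (μ (T j))⁻¹ * ∫⁻ x in T j, g2 x ∂μ) z := funext (hM g2)
    rw [this]
    exact Measurable.iSup fun j => measurable_const.indicator (hTm j)
  have hprod : Measurable fun z => Mα g1 z * M g2 z := hMαm.mul hMm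
  have key : ∀ j, μ (T j) ^ (q / p) * ((μ (T j))⁻¹ * ∫⁻ x in T j, g1 x ∂μ) *
      ((μ (T j))⁻¹ * ∫⁻ x in T j, g2 x ∂μ) ≤
      c⁻¹ * ∫⁻ z in K j, Mα g1 z * M g2 z ∂μ := by
    intro j
    set a := (μ (T j))⁻¹ * ∫⁻ x in T j, g1 x ∂μ with ha
    set b := (μ (T j))⁻¹ * ∫⁻ x in T j, g2 x ∂μ with hb
    have hsplit : μ (T j) ^ (q / p) = μ (T j) ^ (q / p - 1) * μ (T j) := by
      have h1 : q / p = (q / p - 1) + 1 := by ring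
      nth_rewrite 1 [h1]
      rw [ENNReal.rpow_add _ _ (hTpos j).ne' (hTfin j).ne, ENNReal.rpow_one]
    have hTK : μ (T j) ≤ c⁻¹ * μ (K j) := by
      calc μ (T j) = c⁻¹ * (c * μ (T j)) := by
            rw [← mul_assoc, ENNReal.inv_mul_cancel hc.ne' hcfin, one_mul]
        _ ≤ c⁻¹ * μ (K j) := mul_le_mul_right (hlow j) _
    have hpt : ∀ z ∈ K j, μ (T j) ^ (q / p - 1) * a * b ≤ Mα g1 z * M g2 z := by
      intro z hz
      have hzT : z ∈ T j := hKT j hz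
      have h1 : μ (T j) ^ (q / p - 1) * a ≤ Mα g1 z := by
        rw [hMα]
        refine le_trans ?_ (le_iSup _ j)
        rw [Set.indicator_of_mem hzT]
      have h2 : b ≤ M g2 z := by
        rw [hM]
        refine le_trans ?_ (le_iSup _ j)
        rw [Set.indicator_of_mem hzT]
      exact mul_le_mul' h1 h2
    calc μ (T j) ^ (q / p) * a * b
        = (μ (T j) ^ (q / p - 1) * a * b) * μ (T j) := by rw [hsplit]; ring
      _ ≤ (μ (T j) ^ (q / p - 1) * a * b) * (c⁻¹ * μ (K j)) := mul_le_mul_right hTK _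
      _ = c⁻¹ * ((μ (T j) ^ (q / p - 1) * a * b) * μ (K j)) := by ring
      _ = c⁻¹ * ∫⁻ _ in K j, (μ (T j) ^ (q / p - 1) * a * b) ∂μ := by
          rw [setLIntegral_const]
      _ ≤ c⁻¹ * ∫⁻ z in K j, Mα g1 z * M g2 z ∂μ := by
          exact mul_le_mul_right (setLIntegral_mono hprod hpt) _
  have hint1 : ∫⁻ z, g1 z ^ (p / N) ∂μ = ∫⁻ x, f x ^ p ∂μ := by
    refine lintegral_congr fun x => ?_
    rw [hg1, ← ENNReal.rpow_mul]
    congr 1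
    field_simp
  have hint2 : ∫⁻ z, g2 z ^ (p / (q - N)) ∂μ = ∫⁻ x, f x ^ p ∂μ := by
    refine lintegral_congr fun x => ?_
    rw [hg2, ← ENNReal.rpow_mul]
    congr 1
    field_simp
  calc ∑' j, μ (T j) ^ (q / p) * ((μ (T j))⁻¹ * ∫⁻ x in T j, g1 x ∂μ) *
        ((μ (T j))⁻¹ * ∫⁻ x in T j, g2 x ∂μ)
      ≤ ∑' j, c⁻¹ * ∫⁻ z in K j, Mα g1 z * M g2 z ∂μ := ENNReal.tsum_le_tsum key
    _ = c⁻¹ * ∑' j, ∫⁻ z in K j, Mα g1 z * M g2 z ∂μ := ENNReal.tsum_mul_left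
    _ = c⁻¹ * ∫⁻ z in ⋃ j, K j, Mα g1 z * M g2 z ∂μ := by
        rw [lintegral_iUnion hKm hdisj]
    _ ≤ c⁻¹ * ∫⁻ z, Mα g1 z * M g2 z ∂μ :=
        mul_le_mul_right (setLIntegral_le_lintegral _ _) _
    _ ≤ c⁻¹ * ((∫⁻ z, Mα g1 z ^ s ∂μ) ^ (1 / s) * (∫⁻ z, M g2 z ^ s' ∂μ) ^ (1 / s')) :=
        mul_le_mul_right
          (ENNReal.lintegral_mul_le_Lp_mul_Lq μ hconj hMαm.aemeasurable hMm.aemeasurable) _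
    _ ≤ c⁻¹ * ((A * (∫⁻ z, g1 z ^ (p / N) ∂μ) ^ ((N : ℝ) / p)) *
          (B * (∫⁻ z, g2 z ^ (p / (q - N)) ∂μ) ^ ((q - N) / p))) := by
        exact mul_le_mul_right (mul_le_mul' (hbdMα g1 hg1m) (hbdM g2 hg2m)) _
    _ = c⁻¹ * A * B * ((∫⁻ x, f x ^ p ∂μ) ^ ((N : ℝ) / p) *
          (∫⁻ x, f x ^ p ∂μ) ^ ((q - N) / p)) := by rw [hint1, hint2]; ring
    _ = c⁻¹ * A * B * (∫⁻ x, f x ^ p ∂μ) ^ (q / p) := by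
        rw [← ENNReal.rpow_add_of_nonneg _ _ (by positivity) (by positivity)]
        congr 2
        field_simp
        ring
end

section
/- Let (X, μ) be a measure space, q ≥ p ≥ 1, and let {(T_j, E_j, K_j)} be a countable family where K_j ⊆ T_j are pairwise disjoint, and E_j are measurable with bounded overlap (Σ_j 1_{E_j} ≤ C₀ pointwise). Suppose ν is a measure with ν(K_j) ≤ C₁ μ(K_j)^{q/p} for all j (a Carleson-type condition), and suppose a nonnegative function f satisfies the sub-mean value property f(z)^{q−N} ≤ C₂ μ(K_j)^{−1} ∫_{E_j} f^{q−N} dμ for all z ∈ K_j. Then for each j, ∫_{T_j} f^{q−N} dν ≤ C₁C₂ Σ_{K_i ⊆ T_j} μ(K_i)^{q/p − 1} ∫_{E_i} f^{q−N} dμ ≤ C₁C₂ (sup_{K_i ⊆ T_j} μ(K_i)^{q/p − 1}) · C₀ ∫_{⋃_{K_i ⊆ T_j} E_i} f^{q−N} dμ. -/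
/-!
On each kube `K i` the sub-mean value property bounds `g = f ^ (q - N)` by `C₂ / μ (K i)` times
its integral over `E i`, so `∫_{K i} g dν ≤ C₂ ν (K i) / μ (K i) ∫_{E i} g dμ`, and the Carleson
condition turns `ν (K i) / μ (K i)` into `C₁ μ (K i) ^ (q / p - 1)`. Summing over the kubes
covering the tent gives the first bound. For the second, pull out the supremum of the factors
`μ (K i) ^ (q / p - 1)`; by the bounded overlap, `∑ i, ∫_{E i} g dμ = ∫ (∑ i, 1_{E i}) g dμ` is at
most `C₀ ∫_{⋃ E i} g dμ`.
-/

open MeasureTheory ENNReal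

theorem ENNReal.rpow_mul_inv_le_rpow_sub_one (x : ℝ≥0∞) (a : ℝ) : x ^ a * x⁻¹ ≤ x ^ (a - 1) := by
  rcases eq_or_ne x 0 with rfl | hx₀
  · rcases lt_trichotomy a 1 with ha | rfl | ha
    · simp [ENNReal.zero_rpow_of_neg (sub_neg.2 ha)]
    · simp
    · simp [ENNReal.zero_rpow_of_pos (by linarith : 0 < a)]
  rcases eq_or_ne x ⊤ with rfl | hx
  · simp
  · rw [ENNReal.rpow_sub _ _ hx₀ hx, ENNReal.rpow_one, div_eq_mul_inv]

section

variable {X : Type*} [MeasurableSpace X] {μ ν : Measure X}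

theorem setLIntegral_le_of_submean_of_carleson {K E : Set X} {g : X → ℝ≥0∞} {C₁ C₂ : ℝ≥0∞} {s : ℝ}
    (hcarleson : ν K ≤ C₁ * μ K ^ s)
    (hsubmean : ∀ z ∈ K, g z ≤ C₂ * (μ K)⁻¹ * ∫⁻ x in E, g x ∂μ) :
    ∫⁻ x in K, g x ∂ν ≤ C₁ * C₂ * (μ K ^ (s - 1) * ∫⁻ x in E, g x ∂μ) :=
  calc ∫⁻ x in K, g x ∂ν ≤ ∫⁻ _ in K, C₂ * (μ K)⁻¹ * ∫⁻ x in E, g x ∂μ ∂ν :=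
        setLIntegral_mono measurable_const hsubmean
    _ = C₂ * (μ K)⁻¹ * (∫⁻ x in E, g x ∂μ) * ν K := setLIntegral_const _ _
    _ ≤ C₂ * (μ K)⁻¹ * (∫⁻ x in E, g x ∂μ) * (C₁ * μ K ^ s) := by gcongr
    _ = C₁ * C₂ * ((μ K ^ s * (μ K)⁻¹) * ∫⁻ x in E, g x ∂μ) := by ring
    _ ≤ C₁ * C₂ * (μ K ^ (s - 1) * ∫⁻ x in E, g x ∂μ) := by
        gcongr; exact ENNReal.rpow_mul_inv_le_rpow_sub_one _ _

theorem tsum_setLIntegral_le_mul_lintegral {ι : Type*} [Countable ι] {E : ι → Set X}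
    {g : X → ℝ≥0∞} {C : ℝ≥0∞} (hE : ∀ i, MeasurableSet (E i)) (hg : Measurable g)
    (hoverlap : ∀ x, ∑' i, (E i).indicator (fun _ => (1 : ℝ≥0∞)) x ≤ C) :
    ∑' i, ∫⁻ x in E i, g x ∂μ ≤ C * ∫⁻ x, g x ∂μ :=
  calc ∑' i, ∫⁻ x in E i, g x ∂μ = ∫⁻ x, ∑' i, (E i).indicator g x ∂μ := by
        rw [lintegral_tsum fun i => (hg.indicator (hE i)).aemeasurable]
        simp_rw [lintegral_indicator (hE _)]
    _ ≤ ∫⁻ x, C * g x ∂μ := lintegral_mono fun x => by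
        calc ∑' i, (E i).indicator g x
            = ∑' i, (E i).indicator (fun _ => (1 : ℝ≥0∞)) x * g x := by
              simp_rw [← Set.indicator_mul_left, one_mul]
          _ = (∑' i, (E i).indicator (fun _ => (1 : ℝ≥0∞)) x) * g x := ENNReal.tsum_mul_right
          _ ≤ C * g x := by gcongr; exact hoverlap x
    _ = C * ∫⁻ x, g x ∂μ := lintegral_const_mul C hg

theorem tsum_setLIntegral_le_mul_setLIntegral_iUnion {ι : Type*} [Countable ι] {E : ι → Set X}
    {g : X → ℝ≥0∞} {C : ℝ≥0∞} (hE : ∀ i, MeasurableSet (E i)) (hg : Measurable g)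
    (hoverlap : ∀ x, ∑' i, (E i).indicator (fun _ => (1 : ℝ≥0∞)) x ≤ C) :
    ∑' i, ∫⁻ x in E i, g x ∂μ ≤ C * ∫⁻ x in ⋃ i, E i, g x ∂μ := by
  simpa only [Measure.restrict_restrict_of_subset (Set.subset_iUnion E _)] using
    tsum_setLIntegral_le_mul_lintegral (μ := μ.restrict (⋃ i, E i)) hE hg hoverlap

theorem ENNReal.tsum_mul_le_iSup_mul_tsum {ι : Type*} (a b : ι → ℝ≥0∞) :
    ∑' i, a i * b i ≤ (⨆ i, a i) * ∑' i, b i := by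
  rw [← ENNReal.tsum_mul_left]
  exact ENNReal.tsum_le_tsum fun i => by gcongr; exact le_iSup a i

end

theorem tent_decomposition_bound_general {X : Type*} [MeasurableSpace X] (μ ν : Measure X)
    (p q : ℝ)
    (N : ℕ)
    (T E K : ℕ → Set X)
    (hEm : ∀ j, MeasurableSet (E j))
    (hcover : ∀ j, T j ⊆ ⋃ i ∈ {i | K i ⊆ T j}, K i)
    (C₀ C₁ C₂ : ℝ≥0∞)
    (hoverlap : ∀ x, ∑' j, (E j).indicator (fun _ => (1 : ℝ≥0∞)) x ≤ C₀)
    (hCarleson : ∀ j, ν (K j) ≤ C₁ * μ (K j) ^ (q / p))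
    (f : X → ℝ≥0∞) (hf : Measurable f)
    (hsubmean : ∀ j, ∀ z ∈ K j,
      f z ^ (q - (N : ℝ)) ≤ C₂ * (μ (K j))⁻¹ * ∫⁻ x in E j, f x ^ (q - (N : ℝ)) ∂μ) :
    ∀ j₀,
      (∫⁻ x in T j₀, f x ^ (q - (N : ℝ)) ∂ν ≤
        C₁ * C₂ * ∑' i : {i | K i ⊆ T j₀},
          μ (K i) ^ (q / p - 1) * ∫⁻ x in E i, f x ^ (q - (N : ℝ)) ∂μ) ∧
      (C₁ * C₂ * ∑' i : {i | K i ⊆ T j₀},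
          μ (K i) ^ (q / p - 1) * ∫⁻ x in E i, f x ^ (q - (N : ℝ)) ∂μ ≤
        C₁ * C₂ * C₀ * (⨆ i : {i | K i ⊆ T j₀}, μ (K i) ^ (q / p - 1)) *
          ∫⁻ x in ⋃ i ∈ {i | K i ⊆ T j₀}, E i, f x ^ (q - (N : ℝ)) ∂μ) := by
  intro j₀
  set S := {i | K i ⊆ T j₀}
  set g : X → ℝ≥0∞ := fun x => f x ^ (q - (N : ℝ))
  have hoverlap_tent (x : X) : ∑' i : S, (E i).indicator (fun _ => (1 : ℝ≥0∞)) x ≤ C₀ :=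
    (ENNReal.tsum_comp_le_tsum_of_injective Subtype.val_injective _).trans (hoverlap x)
  refine ⟨?_, ?_⟩
  · calc ∫⁻ x in T j₀, g x ∂ν ≤ ∫⁻ x in ⋃ i : S, K i, g x ∂ν :=
          lintegral_mono_set ((hcover j₀).trans_eq (Set.biUnion_eq_iUnion _ _))
      _ ≤ ∑' i : S, ∫⁻ x in K i, g x ∂ν := lintegral_iUnion_le _ _
      _ ≤ ∑' i : S, C₁ * C₂ * (μ (K i) ^ (q / p - 1) * ∫⁻ x in E i, g x ∂μ) :=
          ENNReal.tsum_le_tsum fun i =>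
            setLIntegral_le_of_submean_of_carleson (hCarleson i) (hsubmean i)
      _ = C₁ * C₂ * ∑' i : S, μ (K i) ^ (q / p - 1) * ∫⁻ x in E i, g x ∂μ :=
          ENNReal.tsum_mul_left
  · calc C₁ * C₂ * ∑' i : S, μ (K i) ^ (q / p - 1) * ∫⁻ x in E i, g x ∂μ
        ≤ C₁ * C₂ * ((⨆ i : S, μ (K i) ^ (q / p - 1)) * ∑' i : S, ∫⁻ x in E i, g x ∂μ) := by
          gcongr; exact ENNReal.tsum_mul_le_iSup_mul_tsum _ _
      _ ≤ C₁ * C₂ * ((⨆ i : S, μ (K i) ^ (q / p - 1)) * (C₀ * ∫⁻ x in ⋃ i : S, E i, g x ∂μ)) := by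
          gcongr
          exact tsum_setLIntegral_le_mul_setLIntegral_iUnion (fun i => hEm i) (hf.pow_const _)
            hoverlap_tent
      _ = _ := by rw [Set.biUnion_eq_iUnion]; ring

/-- Key step in the pointwise sparse bound: decomposing a tent into its
descendant kubes, the sub-mean value property on each kube, the dyadic
Carleson condition `ν(K_i) ≤ C₁ μ(K_i)^{q/p}`, and the bounded overlap of the
enlarged balls `E_i` give
`∫_{T_j} f^{q-N} dν ≤ C₁C₂ Σ_{K_i ⊆ T_j} μ(K_i)^{q/p-1} ∫_{E_i} f^{q-N} dμ
  ≤ C₁C₂ C₀ (sup_{K_i ⊆ T_j} μ(K_i)^{q/p-1}) ∫_{⋃ E_i} f^{q-N} dμ`. -/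
theorem tent_decomposition_bound {X : Type*} [MeasurableSpace X] (μ ν : Measure X)
    (p q : ℝ) (hp : 1 ≤ p) (hpq : p ≤ q)
    (N : ℕ) (hN : 1 ≤ N) (hNq : (N : ℝ) ≤ q)
    (T E K : ℕ → Set X)
    (hTm : ∀ j, MeasurableSet (T j)) (hEm : ∀ j, MeasurableSet (E j))
    (hKm : ∀ j, MeasurableSet (K j))
    (hKT : ∀ j, K j ⊆ T j)
    (hdisj : Pairwise (Function.onFun Disjoint K))
    (hcover : ∀ j, T j ⊆ ⋃ i ∈ {i | K i ⊆ T j}, K i)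
    (hμKpos : ∀ j, 0 < μ (K j)) (hμKfin : ∀ j, μ (K j) < ∞)
    (C₀ C₁ C₂ : ℝ≥0∞)
    (hoverlap : ∀ x, ∑' j, (E j).indicator (fun _ => (1 : ℝ≥0∞)) x ≤ C₀)
    (hCarleson : ∀ j, ν (K j) ≤ C₁ * μ (K j) ^ (q / p))
    (f : X → ℝ≥0∞) (hf : Measurable f)
    (hsubmean : ∀ j, ∀ z ∈ K j,
      f z ^ (q - (N : ℝ)) ≤ C₂ * (μ (K j))⁻¹ * ∫⁻ x in E j, f x ^ (q - (N : ℝ)) ∂μ) :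
    ∀ j₀,
      (∫⁻ x in T j₀, f x ^ (q - (N : ℝ)) ∂ν ≤
        C₁ * C₂ * ∑' i : {i | K i ⊆ T j₀},
          μ (K i) ^ (q / p - 1) * ∫⁻ x in E i, f x ^ (q - (N : ℝ)) ∂μ) ∧
      (C₁ * C₂ * ∑' i : {i | K i ⊆ T j₀},
          μ (K i) ^ (q / p - 1) * ∫⁻ x in E i, f x ^ (q - (N : ℝ)) ∂μ ≤
        C₁ * C₂ * C₀ * (⨆ i : {i | K i ⊆ T j₀}, μ (K i) ^ (q / p - 1)) *
          ∫⁻ x in ⋃ i ∈ {i | K i ⊆ T j₀}, E i, f x ^ (q - (N : ℝ)) ∂μ) :=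
  tent_decomposition_bound_general μ ν p q N T E K hEm hcover C₀ C₁ C₂ hoverlap hCarleson f hf
    hsubmean
end
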